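/- The map u ↦ icdf_u is an isometry from the metric space (P₂(Ω), W₂) onto the set I = {icdf_u : u ∈ P₂(Ω)}, equipped with the L²([0,1]) distance, and I is a convex subset of L²([0,1]). -/

import Mathlib

/-!
On `(0, 1)` the quantile function `icdf μ` pushes the uniform measure forward to `μ`, so
`r ↦ (icdf u r, icdf v r)` is a coupling of `u` and `v`, the comonotone coupling, with cost
`∫₀¹ (icdf u - icdf v)²`. It is optimal: in `(x - y)² = (x - a)² + (y - a)² - 2 (x - a) (y - a)`
the first two terms only see the marginals, and by Hoeffding's formula
`∫ (x - a) (y - a) dπ = ∫_{q ≥ a} π ((q₁, ∞) × (q₂, ∞)) dq`, where every coupling has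
`π ((q₁, ∞) × (q₂, ∞)) ≤ min (u (q₁, ∞)) (v (q₂, ∞))` with equality for the comonotone one.

For convexity, a convex combination of quantile functions is still nondecreasing and
right-continuous on `[0, 1)`, and such a function `ψ` is the quantile function of the
pushforward of the uniform measure on `(0, 1)` by `ψ`.
-/

open MeasureTheory Set

noncomputable def cdf' (μ : Measure ℝ) (x : ℝ) : ℝ := (μ (Iic x)).toReal

noncomputable def icdf (μ : Measure ℝ) (s : ℝ) : ℝ := sInf {x | s < cdf' μ x}

noncomputable def W2 (μ ν : Measure ℝ) : ℝ :=
  sInf {r | ∃ π : Measure (ℝ × ℝ), IsProbabilityMeasure π ∧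
    π.map Prod.fst = μ ∧ π.map Prod.snd = ν ∧
    r = (∫ p, (p.1 - p.2) ^ 2 ∂π) ^ (1 / 2 : ℝ)}

/-- Membership in P₂(Ω) for Ω = [xmin, xmax]: probability measure supported in Ω with
finite second moment. -/
def memP2 (xmin xmax : ℝ) (μ : Measure ℝ) : Prop :=
  IsProbabilityMeasure μ ∧ (∀ᵐ x ∂μ, x ∈ Icc xmin xmax) ∧ Integrable (fun x => x ^ 2) μ

lemma Continuous.integrable_of_ae_mem_isCompact {X E : Type*} [TopologicalSpace X] [T2Space X]
    [MeasurableSpace X] [OpensMeasurableSpace X] [NormedAddCommGroup E] {μ : Measure X}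
    [IsFiniteMeasureOnCompacts μ] {K : Set X} (hK : IsCompact K) (hμK : ∀ᵐ x ∂μ, x ∈ K)
    {f : X → E} (hf : Continuous f) : Integrable f μ := by
  rw [← Measure.restrict_eq_self_of_ae_mem hμK]
  exact hf.continuousOn.integrableOn_compact hK

section CDF

variable {μ : Measure ℝ}

lemma cdf'_nonneg (x : ℝ) : 0 ≤ cdf' μ x := ENNReal.toReal_nonneg

lemma cdf'_eq_zero_of_lt {a x : ℝ} (hμ : ∀ᵐ y ∂μ, a ≤ y) (hx : x < a) : cdf' μ x = 0 := by
  have : μ (Iic x) = 0 :=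
    measure_mono_null (fun y (hy : y ≤ x) (hay : a ≤ y) => (hy.trans_lt hx).not_ge hay) hμ
  rw [cdf', this, ENNReal.toReal_zero]

variable [IsProbabilityMeasure μ]

lemma cdf'_eq_cdf : cdf' μ = ProbabilityTheory.cdf μ := by
  funext x
  rw [cdf', ProbabilityTheory.cdf_eq_real, measureReal_def]

lemma cdf'_mono : Monotone (cdf' μ) :=
  cdf'_eq_cdf (μ := μ) ▸ ProbabilityTheory.monotone_cdf μ

lemma cdf'_le_one (x : ℝ) : cdf' μ x ≤ 1 :=
  cdf'_eq_cdf (μ := μ) ▸ ProbabilityTheory.cdf_le_one μ x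

lemma ofReal_cdf' (x : ℝ) : ENNReal.ofReal (cdf' μ x) = μ (Iic x) :=
  cdf'_eq_cdf (μ := μ) ▸ ProbabilityTheory.ofReal_cdf μ x

lemma measure_Ioi_eq_ofReal_one_sub_cdf' (x : ℝ) : μ (Ioi x) = ENNReal.ofReal (1 - cdf' μ x) := by
  rw [← compl_Iic, prob_compl_eq_one_sub measurableSet_Iic, ← ofReal_cdf',
    ENNReal.ofReal_sub 1 (cdf'_nonneg x), ENNReal.ofReal_one]

lemma exists_lt_cdf' {s : ℝ} (hs : s < 1) : ∃ x, s < cdf' μ x := by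
  rw [cdf'_eq_cdf]
  exact ((ProbabilityTheory.tendsto_cdf_atTop μ).eventually (lt_mem_nhds hs)).exists

lemma le_cdf'_of_forall_lt {s x : ℝ} (h : ∀ y, x < y → s ≤ cdf' μ y) : s ≤ cdf' μ x := by
  rw [cdf'_eq_cdf] at h ⊢
  exact ge_of_tendsto ((ProbabilityTheory.cdf μ).right_continuous x |>.mono_left
      (nhdsWithin_mono x Ioi_subset_Ici_self))
    (eventually_nhdsWithin_of_forall h)

lemma cdf'_eq_one_of_le {b x : ℝ} (hμ : ∀ᵐ y ∂μ, y ≤ b) (hx : b ≤ x) : cdf' μ x = 1 := by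
  have : μ (Iic x)ᶜ = 0 :=
    measure_mono_null (fun y (hy : ¬y ≤ x) (hyb : y ≤ b) => hy (hyb.trans hx)) hμ
  rw [cdf', (prob_compl_eq_zero_iff measurableSet_Iic).1 this, ENNReal.toReal_one]

end CDF

section Quantile

variable {μ : Measure ℝ} {a b s x : ℝ}

lemma icdf_of_neg (hs : s < 0) : icdf μ s = 0 := by
  have : {x | s < cdf' μ x} = univ := eq_univ_of_forall fun x => hs.trans_le (cdf'_nonneg x)
  rw [icdf, this, Real.sInf_of_not_bddBelow not_bddBelow_univ]

lemma bddBelow_lt_cdf' (hμ : ∀ᵐ y ∂μ, a ≤ y) (hs : 0 ≤ s) :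
    BddBelow {x | s < cdf' μ x} :=
  ⟨a, fun _ hx => not_lt.1 fun hxa => hs.not_gt (cdf'_eq_zero_of_lt hμ hxa ▸ hx)⟩

lemma icdf_le_of_lt_cdf' (hμ : ∀ᵐ y ∂μ, a ≤ y) (hs : 0 ≤ s) (h : s < cdf' μ x) :
    icdf μ s ≤ x :=
  csInf_le (bddBelow_lt_cdf' hμ hs) h

variable [IsProbabilityMeasure μ]

lemma icdf_of_one_le (hs : 1 ≤ s) : icdf μ s = 0 := by
  have : {x | s < cdf' μ x} = ∅ :=
    eq_empty_of_forall_notMem fun x hx => ((cdf'_le_one x).trans hs).not_gt hx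
  rw [icdf, this, Real.sInf_empty]

lemma le_cdf'_of_icdf_le (hs : s < 1) (h : icdf μ s ≤ x) : s ≤ cdf' μ x := by
  refine le_cdf'_of_forall_lt fun y hy => ?_
  obtain ⟨z, hz, hzy⟩ := exists_lt_of_csInf_lt (exists_lt_cdf' hs) (h.trans_lt hy)
  exact (le_of_lt hz).trans (cdf'_mono hzy.le)

lemma icdf_mem_Icc (hμ : ∀ᵐ y ∂μ, y ∈ Icc a b) (hs : s ∈ Ico 0 1) : icdf μ s ∈ Icc a b :=
  ⟨le_csInf (exists_lt_cdf' hs.2) fun _ hx =>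
      not_lt.1 fun hxa => hs.1.not_gt (cdf'_eq_zero_of_lt (hμ.mono fun _ h => h.1) hxa ▸ hx),
    icdf_le_of_lt_cdf' (hμ.mono fun _ h => h.1) hs.1
      (cdf'_eq_one_of_le (hμ.mono fun _ h => h.2) le_rfl ▸ hs.2)⟩

lemma monotoneOn_icdf (hμ : ∀ᵐ y ∂μ, a ≤ y) : MonotoneOn (icdf μ) (Ico 0 1) :=
  fun _ hs _ ht hst => csInf_le_csInf (bddBelow_lt_cdf' hμ hs.1) (exists_lt_cdf' ht.2)
    fun _ hx => hst.trans_lt hx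

lemma continuousWithinAt_icdf (hμ : ∀ᵐ y ∂μ, a ≤ y) (hs : s ∈ Ico 0 1) :
    ContinuousWithinAt (icdf μ) (Ici s) s := by
  refine tendsto_order.2 ⟨fun x hx => ?_, fun x hx => ?_⟩
  · filter_upwards [Ico_mem_nhdsGE hs.2] with r hr
    exact hx.trans_le (monotoneOn_icdf hμ hs ⟨hs.1.trans hr.1, hr.2⟩ hr.1)
  · obtain ⟨y, hy, hyx⟩ := exists_lt_of_csInf_lt (exists_lt_cdf' hs.2) hx
    filter_upwards [Ico_mem_nhdsGE (lt_min hy hs.2)] with r hr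
    exact (icdf_le_of_lt_cdf' hμ (hs.1.trans hr.1) (hr.2.trans_le (min_le_left _ _))).trans_lt hyx

end Quantile

instance : IsProbabilityMeasure (volume.restrict (Ioo (0 : ℝ) 1)) :=
  ⟨by rw [Measure.restrict_apply_univ, Real.volume_Ioo, sub_zero, ENNReal.ofReal_one]⟩

section InverseTransform

variable {μ : Measure ℝ} [IsProbabilityMeasure μ] {a : ℝ}

lemma aemeasurable_icdf (hμ : ∀ᵐ y ∂μ, a ≤ y) :
    AEMeasurable (icdf μ) (volume.restrict (Ioo 0 1)) :=
  aemeasurable_restrict_of_monotoneOn measurableSet_Ioo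
    ((monotoneOn_icdf hμ).mono Ioo_subset_Ico_self)

lemma map_icdf (hμ : ∀ᵐ y ∂μ, a ≤ y) : (volume.restrict (Ioo 0 1)).map (icdf μ) = μ := by
  refine Measure.ext_of_Iic _ _ fun x => ?_
  rw [Measure.map_apply_of_aemeasurable (aemeasurable_icdf hμ) measurableSet_Iic,
    Measure.restrict_apply' measurableSet_Ioo, ← ofReal_cdf']
  refine le_antisymm ?_ ?_
  · calc volume (icdf μ ⁻¹' Iic x ∩ Ioo 0 1) ≤ volume (Ioc 0 (cdf' μ x)) :=
          measure_mono fun r hr => ⟨hr.2.1, le_cdf'_of_icdf_le hr.2.2 hr.1⟩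
      _ = ENNReal.ofReal (cdf' μ x) := by rw [Real.volume_Ioc, sub_zero]
  · calc ENNReal.ofReal (cdf' μ x) = volume (Ioo 0 (cdf' μ x)) := by
          rw [Real.volume_Ioo, sub_zero]
      _ ≤ volume (icdf μ ⁻¹' Iic x ∩ Ioo 0 1) := measure_mono fun r hr =>
          ⟨icdf_le_of_lt_cdf' hμ hr.1.le hr.2, hr.1, hr.2.trans_le (cdf'_le_one x)⟩

end InverseTransform

lemma icdf_map_eq_of_monotoneOn {ψ : ℝ → ℝ} (hψ : MonotoneOn ψ (Ico 0 1)) {s : ℝ}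
    (hs : s ∈ Ico 0 1) (hψs : ContinuousWithinAt ψ (Ici s) s) :
    icdf ((volume.restrict (Ioo 0 1)).map ψ) s = ψ s := by
  have hψm : AEMeasurable ψ (volume.restrict (Ioo 0 1)) :=
    aemeasurable_restrict_of_monotoneOn measurableSet_Ioo (hψ.mono Ioo_subset_Ico_self)
  have hcdf (x : ℝ) :
      cdf' ((volume.restrict (Ioo 0 1)).map ψ) x = volume.real (ψ ⁻¹' Iic x ∩ Ioo 0 1) := by
    rw [cdf', Measure.map_apply_of_aemeasurable hψm measurableSet_Iic,
      Measure.restrict_apply' measurableSet_Ioo, measureReal_def]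
  have lower (x : ℝ) (hx : s < cdf' ((volume.restrict (Ioo 0 1)).map ψ) x) : ψ s ≤ x := by
    by_contra! hxs
    have hsub : ψ ⁻¹' Iic x ∩ Ioo 0 1 ⊆ Ioc 0 s := fun r hr => ⟨hr.2.1, not_lt.1 fun hsr =>
      hxs.not_ge ((hψ hs ⟨hs.1.trans hsr.le, hr.2.2⟩ hsr.le).trans hr.1)⟩
    have := measureReal_mono (μ := volume) hsub measure_Ioc_lt_top.ne
    rw [Real.volume_real_Ioc_of_le hs.1, sub_zero, ← hcdf] at this
    linarith
  have upper (w : ℝ) (hw : ψ s < w) : s < cdf' ((volume.restrict (Ioo 0 1)).map ψ) w := by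
    obtain ⟨u, hu, hsub⟩ := mem_nhdsGE_iff_exists_Ico_subset.1 (hψs (Iio_mem_nhds hw))
    have hsub' : Ioo 0 (min u 1) ⊆ ψ ⁻¹' Iic w ∩ Ioo 0 1 := by
      refine fun r hr => ⟨?_, hr.1, hr.2.trans_le (min_le_right _ _)⟩
      rcases le_or_gt r s with hrs | hsr
      · exact (hψ ⟨hr.1.le, hr.2.trans_le (min_le_right _ _)⟩ hs hrs).trans hw.le
      · exact (show ψ r < w from hsub ⟨hsr.le, hr.2.trans_le (min_le_left _ _)⟩).le
    have := measureReal_mono (μ := volume) hsub'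
      ((measure_mono inter_subset_right).trans_lt measure_Ioo_lt_top).ne
    rw [Real.volume_real_Ioo_of_le (le_min (hs.1.trans (le_of_lt hu)) zero_le_one), sub_zero,
      ← hcdf] at this
    exact (lt_min hu hs.2).trans_le this
  exact csInf_eq_of_forall_ge_of_forall_gt_exists_lt ⟨ψ s + 1, upper _ (lt_add_one _)⟩ lower
    fun w hw => ⟨(ψ s + w) / 2, upper _ (by linarith), by linarith⟩

lemma memP2_map {a b : ℝ} {ψ : ℝ → ℝ} (hψm : AEMeasurable ψ (volume.restrict (Ioo 0 1)))
    (hψ : ∀ s ∈ Ioo 0 1, ψ s ∈ Icc a b) : memP2 a b ((volume.restrict (Ioo 0 1)).map ψ) := by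
  have := Measure.isProbabilityMeasure_map hψm
  have hsupp : ∀ᵐ x ∂(volume.restrict (Ioo 0 1)).map ψ, x ∈ Icc a b :=
    (ae_map_iff hψm measurableSet_Icc).2 ((ae_restrict_iff' measurableSet_Ioo).2 (ae_of_all _ hψ))
  exact ⟨this, hsupp, (continuous_pow 2).integrable_of_ae_mem_isCompact isCompact_Icc hsupp⟩

theorem convex_setOf_eq_icdf (a b : ℝ) :
    Convex ℝ {f : ℝ → ℝ | ∃ μ : Measure ℝ, memP2 a b μ ∧ f = icdf μ} := by
  rintro _ ⟨μ, ⟨hμp, hμ, -⟩, rfl⟩ _ ⟨ν, ⟨hνp, hν, -⟩, rfl⟩ t₁ t₂ ht₁ ht₂ ht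
  set ψ := t₁ • icdf μ + t₂ • icdf ν
  have hμ₀ : ∀ᵐ x ∂μ, a ≤ x := hμ.mono fun _ h => h.1
  have hν₀ : ∀ᵐ x ∂ν, a ≤ x := hν.mono fun _ h => h.1
  have hψ : MonotoneOn ψ (Ico 0 1) := fun s hs r hr hsr =>
    add_le_add (mul_le_mul_of_nonneg_left (monotoneOn_icdf hμ₀ hs hr hsr) ht₁)
      (mul_le_mul_of_nonneg_left (monotoneOn_icdf hν₀ hs hr hsr) ht₂)
  have hmem : memP2 a b ((volume.restrict (Ioo 0 1)).map ψ) :=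
    memP2_map (aemeasurable_restrict_of_monotoneOn measurableSet_Ioo (hψ.mono Ioo_subset_Ico_self))
      fun s hs => convex_Icc a b (icdf_mem_Icc hμ (Ioo_subset_Ico_self hs))
        (icdf_mem_Icc hν (Ioo_subset_Ico_self hs)) ht₁ ht₂ ht
  refine ⟨_, hmem, funext fun s => ?_⟩
  have := hmem.1
  -- Outside `[0, 1)` both sides take the junk value `0`.
  rcases lt_or_ge s 0 with hs₀ | hs₀
  · simp [ψ, icdf_of_neg hs₀]
  rcases lt_or_ge s 1 with hs₁ | hs₁
  · exact (icdf_map_eq_of_monotoneOn hψ ⟨hs₀, hs₁⟩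
      (((continuousWithinAt_icdf hμ₀ ⟨hs₀, hs₁⟩).const_smul t₁).add
        ((continuousWithinAt_icdf hν₀ ⟨hs₀, hs₁⟩).const_smul t₂))).symm
  · simp [ψ, icdf_of_one_le hs₁]

-- Hoeffding's formula: Tonelli for the indicator of `{(q, p) | q₁ < p₁ ∧ q₂ < p₂}`.
lemma lintegral_ofReal_mul_ofReal_eq_setLIntegral_measure_prod (c : ℝ) (π : Measure (ℝ × ℝ))
    [SFinite π] :
    ∫⁻ p, ENNReal.ofReal (p.1 - c) * ENNReal.ofReal (p.2 - c) ∂π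
      = ∫⁻ q in Ici c ×ˢ Ici c, π (Ioi q.1 ×ˢ Ioi q.2) := by
  set S := {z : (ℝ × ℝ) × (ℝ × ℝ) | z.1.1 < z.2.1 ∧ z.1.2 < z.2.2}
  have hS : MeasurableSet S :=
    (measurableSet_lt measurable_fst.fst measurable_snd.fst).inter
      (measurableSet_lt measurable_fst.snd measurable_snd.snd)
  calc ∫⁻ p, ENNReal.ofReal (p.1 - c) * ENNReal.ofReal (p.2 - c) ∂π
      = ∫⁻ p, volume.restrict (Ici c ×ˢ Ici c) ((·, p) ⁻¹' S) ∂π := by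
        refine lintegral_congr fun p => ?_
        change _ = volume.restrict _ (Iio p.1 ×ˢ Iio p.2)
        rw [Measure.restrict_apply' (measurableSet_Ici.prod measurableSet_Ici), prod_inter_prod,
          Iio_inter_Ici, Iio_inter_Ici, Measure.volume_eq_prod, Measure.prod_prod,
          Real.volume_Ico, Real.volume_Ico]
    _ = (volume.restrict (Ici c ×ˢ Ici c)).prod π S := (Measure.prod_apply_symm hS).symm
    _ = ∫⁻ q in Ici c ×ˢ Ici c, π (Ioi q.1 ×ˢ Ioi q.2) := Measure.prod_apply hS

section Coupling

variable {u v : Measure ℝ} {π : Measure (ℝ × ℝ)} {a b : ℝ}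

lemma ae_mem_prod_of_map_fst_of_map_snd {s t : Set ℝ} (hs : MeasurableSet s)
    (ht : MeasurableSet t) (h₁ : π.map Prod.fst = u) (h₂ : π.map Prod.snd = v)
    (hu : ∀ᵐ x ∂u, x ∈ s) (hv : ∀ᵐ y ∂v, y ∈ t) : ∀ᵐ p ∂π, p ∈ s ×ˢ t :=
  ((ae_map_iff measurable_fst.aemeasurable hs).1 (h₁ ▸ hu)).and
    ((ae_map_iff measurable_snd.aemeasurable ht).1 (h₂ ▸ hv))

lemma measure_Ioi_prod_Ioi_le_min (h₁ : π.map Prod.fst = u) (h₂ : π.map Prod.snd = v)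
    (x y : ℝ) : π (Ioi x ×ˢ Ioi y) ≤ min (u (Ioi x)) (v (Ioi y)) := by
  rw [← h₁, ← h₂, Measure.map_apply measurable_fst measurableSet_Ioi,
    Measure.map_apply measurable_snd measurableSet_Ioi]
  exact le_min (measure_mono fun p hp => hp.1) (measure_mono fun p hp => hp.2)

lemma ofReal_integral_mul_eq_setLIntegral_measure_prod [IsFiniteMeasure π]
    (hπ : ∀ᵐ p ∂π, p ∈ Icc a b ×ˢ Icc a b) :
    ENNReal.ofReal (∫ p, (p.1 - a) * (p.2 - a) ∂π)
      = ∫⁻ q in Ici a ×ˢ Ici a, π (Ioi q.1 ×ˢ Ioi q.2) := by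
  have hint : Integrable (fun p : ℝ × ℝ => (p.1 - a) * (p.2 - a)) π :=
    (by fun_prop : Continuous fun p : ℝ × ℝ => (p.1 - a) * (p.2 - a)).integrable_of_ae_mem_isCompact
      (isCompact_Icc.prod isCompact_Icc) hπ
  rw [← lintegral_ofReal_mul_ofReal_eq_setLIntegral_measure_prod,
    ofReal_integral_eq_lintegral_ofReal hint
      (hπ.mono fun p hp => mul_nonneg (sub_nonneg.2 hp.1.1) (sub_nonneg.2 hp.2.1))]
  exact lintegral_congr_ae (hπ.mono fun p hp => ENNReal.ofReal_mul (sub_nonneg.2 hp.1.1))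

lemma integral_mul_le_of_measure_Ioi_prod_le {π' : Measure (ℝ × ℝ)} [IsFiniteMeasure π]
    [IsFiniteMeasure π'] (hπ : ∀ᵐ p ∂π, p ∈ Icc a b ×ˢ Icc a b)
    (hπ' : ∀ᵐ p ∂π', p ∈ Icc a b ×ˢ Icc a b)
    (h : ∀ x y, π (Ioi x ×ˢ Ioi y) ≤ π' (Ioi x ×ˢ Ioi y)) :
    ∫ p, (p.1 - a) * (p.2 - a) ∂π ≤ ∫ p, (p.1 - a) * (p.2 - a) ∂π' := by
  rw [← ENNReal.ofReal_le_ofReal_iff (integral_nonneg_of_ae (hπ'.mono fun p hp =>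
      mul_nonneg (sub_nonneg.2 hp.1.1) (sub_nonneg.2 hp.2.1))),
    ofReal_integral_mul_eq_setLIntegral_measure_prod hπ,
    ofReal_integral_mul_eq_setLIntegral_measure_prod hπ']
  exact lintegral_mono fun q => h q.1 q.2

lemma integral_sq_sub_eq [IsFiniteMeasure π] (h₁ : π.map Prod.fst = u)
    (h₂ : π.map Prod.snd = v) (hπ : ∀ᵐ p ∂π, p ∈ Icc a b ×ˢ Icc a b) :
    ∫ p, (p.1 - p.2) ^ 2 ∂π
      = ∫ x, (x - a) ^ 2 ∂u + ∫ y, (y - a) ^ 2 ∂v - 2 * ∫ p, (p.1 - a) * (p.2 - a) ∂π := by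
  have hint {f : ℝ × ℝ → ℝ} (hf : Continuous f) : Integrable f π :=
    hf.integrable_of_ae_mem_isCompact (isCompact_Icc.prod isCompact_Icc) hπ
  calc ∫ p, (p.1 - p.2) ^ 2 ∂π
      = ∫ p, ((p.1 - a) ^ 2 + (p.2 - a) ^ 2) - 2 * ((p.1 - a) * (p.2 - a)) ∂π :=
        integral_congr_ae (ae_of_all _ fun p => by ring)
    _ = _ := by
      rw [integral_sub (hint (by fun_prop)) (hint (by fun_prop)),
        integral_add (hint (by fun_prop)) (hint (by fun_prop)), integral_const_mul, ← h₁, ← h₂,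
        integral_map measurable_fst.aemeasurable (by fun_prop),
        integral_map measurable_snd.aemeasurable (by fun_prop)]

end Coupling

noncomputable def comonotoneCoupling (u v : Measure ℝ) : Measure (ℝ × ℝ) :=
  (volume.restrict (Ioo 0 1)).map fun r => (icdf u r, icdf v r)

section ComonotoneCoupling

variable {u v : Measure ℝ} [IsProbabilityMeasure u] [IsProbabilityMeasure v] {a b : ℝ}

lemma aemeasurable_icdf_prod_icdf (hu : ∀ᵐ x ∂u, a ≤ x) (hv : ∀ᵐ y ∂v, b ≤ y) :
    AEMeasurable (fun r => (icdf u r, icdf v r)) (volume.restrict (Ioo 0 1)) :=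
  (aemeasurable_icdf hu).prodMk (aemeasurable_icdf hv)

lemma isProbabilityMeasure_comonotoneCoupling (hu : ∀ᵐ x ∂u, a ≤ x) (hv : ∀ᵐ y ∂v, b ≤ y) :
    IsProbabilityMeasure (comonotoneCoupling u v) :=
  Measure.isProbabilityMeasure_map (aemeasurable_icdf_prod_icdf hu hv)

lemma map_fst_comonotoneCoupling (hu : ∀ᵐ x ∂u, a ≤ x) (hv : ∀ᵐ y ∂v, b ≤ y) :
    (comonotoneCoupling u v).map Prod.fst = u := by
  rw [comonotoneCoupling, AEMeasurable.map_map_of_aemeasurable measurable_fst.aemeasurable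
    (aemeasurable_icdf_prod_icdf hu hv)]
  exact map_icdf hu

lemma map_snd_comonotoneCoupling (hu : ∀ᵐ x ∂u, a ≤ x) (hv : ∀ᵐ y ∂v, b ≤ y) :
    (comonotoneCoupling u v).map Prod.snd = v := by
  rw [comonotoneCoupling, AEMeasurable.map_map_of_aemeasurable measurable_snd.aemeasurable
    (aemeasurable_icdf_prod_icdf hu hv)]
  exact map_icdf hv

lemma integral_comonotoneCoupling (hu : ∀ᵐ x ∂u, a ≤ x) (hv : ∀ᵐ y ∂v, b ≤ y) :
    ∫ p, (p.1 - p.2) ^ 2 ∂(comonotoneCoupling u v)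
      = ∫ s in Ioo 0 1, (icdf u s - icdf v s) ^ 2 :=
  integral_map (aemeasurable_icdf_prod_icdf hu hv) (by fun_prop)

lemma min_le_comonotoneCoupling_Ioi_prod_Ioi (hu : ∀ᵐ x ∂u, a ≤ x) (hv : ∀ᵐ y ∂v, b ≤ y) (x y : ℝ) :
    min (u (Ioi x)) (v (Ioi y)) ≤ comonotoneCoupling u v (Ioi x ×ˢ Ioi y) := by
  rw [comonotoneCoupling, Measure.map_apply_of_aemeasurable (aemeasurable_icdf_prod_icdf hu hv)
      (measurableSet_Ioi.prod measurableSet_Ioi), Measure.restrict_apply' measurableSet_Ioo,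
    measure_Ioi_eq_ofReal_one_sub_cdf', measure_Ioi_eq_ofReal_one_sub_cdf', ← ENNReal.ofReal_min,
    min_sub_sub_left, ← Real.volume_Ioo]
  have hm := (cdf'_nonneg (μ := u) x).trans (le_max_left _ (cdf' v y))
  refine measure_mono fun r hr => ⟨⟨?_, ?_⟩, hm.trans_lt hr.1, hr.2⟩
  · exact lt_of_not_ge fun h => ((le_cdf'_of_icdf_le hr.2 h).trans (le_max_left _ _)).not_gt hr.1
  · exact lt_of_not_ge fun h => ((le_cdf'_of_icdf_le hr.2 h).trans (le_max_right _ _)).not_gt hr.1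

lemma integral_comonotoneCoupling_le (hu : ∀ᵐ x ∂u, x ∈ Icc a b) (hv : ∀ᵐ y ∂v, y ∈ Icc a b)
    {π : Measure (ℝ × ℝ)} [IsFiniteMeasure π] (h₁ : π.map Prod.fst = u)
    (h₂ : π.map Prod.snd = v) :
    ∫ p, (p.1 - p.2) ^ 2 ∂(comonotoneCoupling u v) ≤ ∫ p, (p.1 - p.2) ^ 2 ∂π := by
  have hu₀ : ∀ᵐ x ∂u, a ≤ x := hu.mono fun _ h => h.1
  have hv₀ : ∀ᵐ y ∂v, a ≤ y := hv.mono fun _ h => h.1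
  have := isProbabilityMeasure_comonotoneCoupling hu₀ hv₀
  have h₁' := map_fst_comonotoneCoupling hu₀ hv₀
  have h₂' := map_snd_comonotoneCoupling hu₀ hv₀
  have hπ := ae_mem_prod_of_map_fst_of_map_snd measurableSet_Icc measurableSet_Icc h₁ h₂ hu hv
  have hπ' := ae_mem_prod_of_map_fst_of_map_snd measurableSet_Icc measurableSet_Icc h₁' h₂' hu hv
  have := integral_mul_le_of_measure_Ioi_prod_le hπ hπ' fun x y =>
    (measure_Ioi_prod_Ioi_le_min h₁ h₂ x y).trans
      (min_le_comonotoneCoupling_Ioi_prod_Ioi hu₀ hv₀ x y)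
  rw [integral_sq_sub_eq h₁' h₂' hπ', integral_sq_sub_eq h₁ h₂ hπ]
  linarith

theorem W2_eq_integral_icdf (hu : ∀ᵐ x ∂u, x ∈ Icc a b) (hv : ∀ᵐ y ∂v, y ∈ Icc a b) :
    W2 u v = (∫ s in Ioo (0 : ℝ) 1, (icdf u s - icdf v s) ^ 2) ^ (1 / 2 : ℝ) := by
  have hu₀ : ∀ᵐ x ∂u, a ≤ x := hu.mono fun _ h => h.1
  have hv₀ : ∀ᵐ y ∂v, a ≤ y := hv.mono fun _ h => h.1
  rw [W2, ← integral_comonotoneCoupling hu₀ hv₀]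
  refine IsLeast.csInf_eq ⟨⟨_, isProbabilityMeasure_comonotoneCoupling hu₀ hv₀,
    map_fst_comonotoneCoupling hu₀ hv₀, map_snd_comonotoneCoupling hu₀ hv₀, rfl⟩, ?_⟩
  rintro _ ⟨π, hπ, h₁, h₂, rfl⟩
  exact Real.rpow_le_rpow (integral_nonneg fun _ => sq_nonneg _)
    (integral_comonotoneCoupling_le hu hv h₁ h₂) (by norm_num)

end ComonotoneCoupling

theorem stmt1_general (xmin xmax : ℝ) :
    (∀ u v : Measure ℝ, memP2 xmin xmax u → memP2 xmin xmax v →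
      W2 u v = (∫ s in Ioo (0 : ℝ) 1, (icdf u s - icdf v s) ^ 2) ^ (1 / 2 : ℝ)) ∧
    Convex ℝ {f : ℝ → ℝ | ∃ μ : Measure ℝ, memP2 xmin xmax μ ∧ f = icdf μ} :=
  ⟨fun _ _ ⟨_, hu, _⟩ ⟨_, hv, _⟩ => W2_eq_integral_icdf hu hv, convex_setOf_eq_icdf xmin xmax⟩

/-- The map u ↦ icdf_u is an isometry from (P₂(Ω), W₂) into L²([0,1]), and its image
I = {icdf_u : u ∈ P₂(Ω)} is a convex set. -/
theorem stmt1 (xmin xmax : ℝ) (hx : xmin < xmax) :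
    (∀ u v : Measure ℝ, memP2 xmin xmax u → memP2 xmin xmax v →
      W2 u v = (∫ s in Ioo (0 : ℝ) 1, (icdf u s - icdf v s) ^ 2) ^ (1 / 2 : ℝ)) ∧
    Convex ℝ {f : ℝ → ℝ | ∃ μ : Measure ℝ, memP2 xmin xmax μ ∧ f = icdf μ} :=
  stmt1_general xmin xmax
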